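/- Let H and K be complex Hilbert spaces and f : H →L[ℂ] K a bounded linear map. Then there exist a bounded linear map p : H →L[ℂ] K that is a partial isometry (p ∘ p† ∘ p = p), and self-adjoint bounded operators i : H →L[ℂ] H and j : K →L[ℂ] K, each injective and with dense range, such that f = p ∘ i and f = j ∘ p. (That is, the dagger category of Hilbert spaces and bounded linear maps admits polar decomposition.) -/

import Mathlib

/-! With `T = √(f† f)` one has `‖T x‖ = ‖f x‖`, so `T x ↦ f x` extends to an isometry of
`(ker T)ᗮ = closure (range T)` into `K`; composed with the orthogonal projection onto that subspace
it is a partial isometry `p` with `f = p T` and `ker p = ker T`.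
Adding to a self-adjoint `A` the projection onto `ker A` gives a self-adjoint injection with dense
range which agrees with `A` after composing with any map that kills `ker A`. Applied to `T` this
yields `i`; applied to `p T p†`, whose kernel lies in `ker p†`, it yields `j` after taking
adjoints of `f† = p† (p T p†)`. -/

open ContinuousLinearMap InnerProduct

section

variable {𝕜 E F : Type*} [RCLike 𝕜]
  [NormedAddCommGroup E] [InnerProductSpace 𝕜 E] [CompleteSpace E]
  [NormedAddCommGroup F] [InnerProductSpace 𝕜 F]

namespace IsSelfAdjoint

variable {A : E →L[𝕜] E}

theorem denseRange_of_injective (hA : IsSelfAdjoint A) (h : Function.Injective A) :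
    DenseRange A := by
  have hker : A.ker = ⊥ := LinearMap.ker_eq_bot.mpr h
  have hclosure : (A : E →ₗ[𝕜] E).range.topologicalClosure = ⊤ := by
    rw [← Submodule.orthogonal_orthogonal_eq_closure, hA.isSymmetric.orthogonal_range, hker,
      Submodule.bot_orthogonal_eq_top]
  have hdense := Submodule.dense_iff_topologicalClosure_eq_top.mpr hclosure
  rwa [LinearMap.coe_range, coe_coe] at hdense

theorem injective_add_starProjection_ker (hA : IsSelfAdjoint A) :
    Function.Injective (A + A.ker.starProjection) := by
  refine (injective_iff_map_eq_zero _).mpr fun x hx => ?_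
  have hPx : A.ker.starProjection x = -A x := eq_neg_of_add_eq_zero_right hx
  have hAx : A x ∈ A.ker ⊓ A.kerᗮ := by
    refine ⟨neg_neg (A x) ▸ A.ker.neg_mem (hPx ▸ A.ker.starProjection_apply_mem x), ?_⟩
    rw [← hA.isSymmetric.orthogonal_range]
    exact Submodule.le_orthogonal_orthogonal _ ⟨x, rfl⟩
  rw [Submodule.inf_orthogonal_eq_bot, Submodule.mem_bot] at hAx
  rw [← A.ker.starProjection_eq_self_iff.mpr hAx, hPx, hAx, neg_zero]

theorem exists_bimorphism_comp_eq (hA : IsSelfAdjoint A) (q : E →L[𝕜] F) (hq : A.ker ≤ q.ker) :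
    ∃ B : E →L[𝕜] E, IsSelfAdjoint B ∧ Function.Injective B ∧ DenseRange B ∧
      q ∘L B = q ∘L A := by
  have hB := hA.add (isSelfAdjoint_starProjection A.ker)
  have hqP : q ∘L A.ker.starProjection = 0 := by
    ext x
    exact hq (A.ker.starProjection_apply_mem x)
  exact ⟨_, hB, hA.injective_add_starProjection_ker,
    hB.denseRange_of_injective hA.injective_add_starProjection_ker, by rw [comp_add, hqP, add_zero]⟩

end IsSelfAdjoint

variable [CompleteSpace F]

def ContinuousLinearMap.IsPartialIsometry (p : E →L[𝕜] F) : Prop :=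
  p ∘L (p† ∘L p) = p

theorem Submodule.isPartialIsometry_comp_orthogonalProjectionOnto (U : Submodule 𝕜 E)
    [CompleteSpace U] {v : U →L[𝕜] F} (hv : v† ∘L v = 1) :
    (v ∘L U.orthogonalProjectionOnto).IsPartialIsometry := by
  have hproj : U.orthogonalProjectionOnto ∘L U.subtypeL = 1 := by
    ext u
    exact congrArg Subtype.val (U.orthogonalProjectionOnto_mem_subspace_eq_self u)
  rw [IsPartialIsometry, adjoint_comp, U.adjoint_orthogonalProjectionOnto]
  calc v ∘L U.orthogonalProjectionOnto ∘L (U.subtypeL ∘L v†) ∘L v ∘L U.orthogonalProjectionOnto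
      = v ∘L (U.orthogonalProjectionOnto ∘L U.subtypeL) ∘L (v† ∘L v) ∘L
          U.orthogonalProjectionOnto := by simp only [comp_assoc]
    _ = v ∘L U.orthogonalProjectionOnto := by rw [hproj, hv, one_def, id_comp, id_comp]

variable {T : E →L[𝕜] E} {f : E →L[𝕜] F}

theorem IsSelfAdjoint.exists_isometry_apply_eq_of_norm_eq (hT : IsSelfAdjoint T)
    (hf : ∀ x, ‖f x‖ = ‖T x‖) :
    ∃ v : T.kerᗮ →L[𝕜] F, (∀ m, ‖v m‖ = ‖m‖) ∧
      ∀ x, v (T.kerᗮ.orthogonalProjectionOnto (T x)) = f x := by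
  have hrange : ∀ x, T x ∈ T.kerᗮ := fun x => by
    rw [← hT.isSymmetric.orthogonal_range]
    exact Submodule.le_orthogonal_orthogonal _ ⟨x, rfl⟩
  set e : E →L[𝕜] T.kerᗮ := T.codRestrict T.kerᗮ hrange
  have he : DenseRange e := by
    refine Subtype.dense_iff.mpr fun y hy => ?_
    rw [← Set.range_comp]
    rwa [← hT.isSymmetric.orthogonal_range, Submodule.orthogonal_orthogonal_eq_closure,
      Submodule.topologicalClosure_coe, LinearMap.coe_range] at hy
  set v := (f : E →ₗ[𝕜] F).extendOfNorm (e : E →ₗ[𝕜] T.kerᗮ)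
  have hve : ∀ x, v (e x) = f x :=
    LinearMap.extendOfNorm_eq he ⟨1, fun x => by simp [hf, e]⟩
  refine ⟨v, fun m => ?_, fun x => ?_⟩
  · refine he.induction_on m (isClosed_eq (by fun_prop) (by fun_prop)) fun x => ?_
    rw [hve, hf]
    rfl
  · rw [← hve]
    exact congrArg v (T.kerᗮ.orthogonalProjectionOnto_mem_subspace_eq_self (e x))

theorem IsSelfAdjoint.exists_isPartialIsometry_comp_eq (hT : IsSelfAdjoint T)
    (hf : ∀ x, ‖f x‖ = ‖T x‖) :
    ∃ p : E →L[𝕜] F, p.IsPartialIsometry ∧ p ∘L T = f ∧ p.ker = T.ker := by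
  obtain ⟨v, hv_norm, hv⟩ := hT.exists_isometry_apply_eq_of_norm_eq hf
  refine ⟨v ∘L T.kerᗮ.orthogonalProjectionOnto,
    T.kerᗮ.isPartialIsometry_comp_orthogonalProjectionOnto
      ((norm_map_iff_adjoint_comp_self v).mp hv_norm), ext hv, ?_⟩
  ext x
  rw [LinearMap.mem_ker, coe_coe, comp_apply, ← norm_eq_zero, hv_norm, norm_eq_zero,
    Submodule.orthogonalProjectionOnto_eq_zero_iff, Submodule.orthogonal_orthogonal]

variable {p : E →L[𝕜] F}

theorem ContinuousLinearMap.IsPartialIsometry.comp_comp_adjoint_comp_eq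
    (hp : p.IsPartialIsometry) (hpT : p ∘L T = f) (hker : p.ker ≤ T.ker) :
    (p ∘L T ∘L p†) ∘L p = f := by
  have hTproj : T ∘L p† ∘L p = T := by
    ext x
    rw [comp_apply, comp_apply, ← sub_eq_zero, ← map_sub]
    refine hker ?_
    change p ((p†) (p x) - x) = 0
    rw [map_sub, ← comp_apply (p†) p, ← comp_apply p, hp, sub_self]
  rw [comp_assoc, comp_assoc, hTproj, hpT]

theorem IsSelfAdjoint.ker_comp_comp_adjoint_le (hT : IsSelfAdjoint T) (hker : p.ker = T.ker) :
    (p ∘L T ∘L p†).ker ≤ (p†).ker := by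
  intro y hy
  have hTy : T ((p†) y) ∈ T.ker := hker ▸ hy
  have hpy : (p†) y ∈ p.ker := by
    rw [hker, ← ker_adjoint_comp_self T, hT.adjoint_eq]
    exact hTy
  rw [← ker_self_comp_adjoint]
  exact hpy

end

theorem ContinuousLinearMap.norm_sqrt_adjoint_comp_self_apply {E F : Type*}
    [NormedAddCommGroup E] [InnerProductSpace ℂ E] [CompleteSpace E]
    [NormedAddCommGroup F] [InnerProductSpace ℂ F] [CompleteSpace F] (f : E →L[ℂ] F) (x : E) :
    ‖CFC.sqrt (f† ∘L f) x‖ = ‖f x‖ := by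
  have hff : 0 ≤ f† ∘L f := (nonneg_iff_isPositive _).mpr f.isPositive_adjoint_comp_self
  rw [← sq_eq_sq₀ (norm_nonneg _) (norm_nonneg _), apply_norm_sq_eq_inner_adjoint_left,
    apply_norm_sq_eq_inner_adjoint_left, (CFC.sqrt_nonneg _).isSelfAdjoint.adjoint_eq, ← mul_def,
    CFC.sqrt_mul_sqrt_self _ hff]

/-- The dagger category of complex Hilbert spaces and bounded linear maps
admits polar decomposition: every `f : H →L[ℂ] K` factors as `f = p ∘ i = j ∘ p` where `p`
is a partial isometry (`p ∘ p† ∘ p = p`) and `i`, `j` are self-adjoint bimorphisms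
(injective with dense range). -/
theorem hilb_admits_polar_decomposition
    {H : Type*} [NormedAddCommGroup H] [InnerProductSpace ℂ H] [CompleteSpace H]
    {K : Type*} [NormedAddCommGroup K] [InnerProductSpace ℂ K] [CompleteSpace K]
    (f : H →L[ℂ] K) :
    ∃ (p : H →L[ℂ] K) (i : H →L[ℂ] H) (j : K →L[ℂ] K),
      p.comp ((ContinuousLinearMap.adjoint p).comp p) = p ∧
      ContinuousLinearMap.adjoint i = i ∧ ContinuousLinearMap.adjoint j = j ∧
      Function.Injective i ∧ DenseRange i ∧
      Function.Injective j ∧ DenseRange j ∧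
      f = p.comp i ∧ f = j.comp p := by
  set T := CFC.sqrt (f† ∘L f)
  have hT : IsSelfAdjoint T := (CFC.sqrt_nonneg _).isSelfAdjoint
  obtain ⟨p, hp, hpT, hker⟩ :=
    hT.exists_isPartialIsometry_comp_eq fun x => (f.norm_sqrt_adjoint_comp_self_apply x).symm
  obtain ⟨i, hi, hi_inj, hi_dense, hpi⟩ := hT.exists_bimorphism_comp_eq p hker.ge
  have hS : IsSelfAdjoint (p ∘L T ∘L p†) := hT.conj_adjoint p
  obtain ⟨j, hj, hj_inj, hj_dense, hpj⟩ :=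
    hS.exists_bimorphism_comp_eq (p†) (hT.ker_comp_comp_adjoint_le hker)
  refine ⟨p, i, j, hp, hi, hj, hi_inj, hi_dense, hj_inj, hj_dense, by rw [hpi, hpT], ?_⟩
  calc f = (p† ∘L (p ∘L T ∘L p†))† := by
        rw [adjoint_comp, hS.adjoint_eq, adjoint_adjoint,
          hp.comp_comp_adjoint_comp_eq hpT hker.le]
    _ = j ∘L p := by rw [← hpj, adjoint_comp, hj.adjoint_eq, adjoint_adjoint]
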